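/- (S_1, S_1, (1, ∞), (1, ∞))↓ holds: from every configuration in which both robots are in state S_1 with observed distances greater than 1, every fair SSynch execution of Algorithm 1 solves rendezvous. -/

import Mathlib

/-- Points in the plane. -/
abbrev Pt := EuclideanSpace ℝ (Fin 2)

/-- Observed directions. -/
inductive Dir | left | right
deriving DecidableEq

/-- The six internal states of Algorithm 1. -/
inductive St | start | s1 | s2 (d : Dir) | s3 | finish
deriving DecidableEq

/-- A local coordinate frame: an orthogonal linear map of the plane. -/
abbrev Frame := Pt ≃ₗᵢ[ℝ] Pt

/-- Observed direction of a local vector `v`: `right` if its first coordinate is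
positive, or is zero with positive second coordinate; `left` otherwise. -/
noncomputable def obsDir (v : Pt) : Dir :=
  if 0 < v 0 ∨ (v 0 = 0 ∧ 0 < v 1) then Dir.right else Dir.left

/-- Local vector observed by a robot with unit distance `u` and frame `A`,
located at `p`, looking at the other robot at `q`. -/
noncomputable def obsVec (u : ℝ) (A : Frame) (p q : Pt) : Pt := u⁻¹ • (A (q - p))

/-- Observed distance. -/
noncomputable def obsDist (u : ℝ) (p q : Pt) : ℝ := ‖q - p‖ / u

/-- Algorithm 1: given the current state, the observed distance `d` and the
observed direction `dir`, returns the new state and the coefficient `μ` such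
that the (global) destination is `p + μ • (q - p)` (i.e. local destination `μ • v`). -/
noncomputable def algo1 (s : St) (d : ℝ) (dir : Dir) : St × ℝ :=
  if d = 0 then (s, 0)
  else match s with
  | .start => if d < 1 then (.s1, 1 - 1/d) else (.s2 dir, 1)
  | .s1 => if d ≤ 1 then (.finish, 0) else (.s2 dir, 1)
  | .s2 d' =>
      if dir = d' then (.finish, 1)
      else if d < 1/2 then (.finish, 0)
      else if d < 1 then (.s3, 1/2)
      else (.s2 d', 1/2)
  | .s3 => if d < 1/4 then (.finish, 0) else (.finish, 1)
  | .finish => if d ≤ 1 then (.finish, 0) else (.finish, 1)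

/-- A configuration: positions and internal states of the two robots
(robot `r` is `false`, robot `s` is `true`). -/
structure Config where
  pos : Bool → Pt
  st : Bool → St

/-- Result (new position, new state) of one activation of robot `i`. -/
noncomputable def stepRobot (u : Bool → ℝ) (A : Bool → Frame) (c : Config) (i : Bool) :
    Pt × St :=
  let p := c.pos i
  let q := c.pos (!i)
  let d := obsDist (u i) p q
  let dir := obsDir (obsVec (u i) (A i) p q)
  let r := algo1 (c.st i) d dir
  (p + r.2 • (q - p), r.1)

/-- One synchronous round in which exactly the robots `i` with `act i = true`
are activated; both activated robots observe the same (pre-round) configuration,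
and rigidly reach their computed destinations. -/
noncomputable def stepConfig (u : Bool → ℝ) (A : Bool → Frame) (act : Bool → Bool)
    (c : Config) : Config where
  pos i := if act i then (stepRobot u A c i).1 else c.pos i
  st i := if act i then (stepRobot u A c i).2 else c.st i

/-- The configuration after `n` rounds of the SSynch execution of Algorithm 1
under schedule `sched`, starting from `c0`. -/
noncomputable def run (u : Bool → ℝ) (A : Bool → Frame) (sched : ℕ → Bool → Bool)
    (c0 : Config) : ℕ → Config
  | 0 => c0
  | n + 1 => stepConfig u A (sched n) (run u A sched c0 n)

/-- A legal fair SSynch schedule: at every round a nonempty set of robots is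
activated, and each robot is activated infinitely often. -/
def FairSched (sched : ℕ → Bool → Bool) : Prop :=
  (∀ n, sched n false = true ∨ sched n true = true) ∧
  (∀ i n, ∃ m, n ≤ m ∧ sched m i = true)

/-- Rendezvous is solved: from some round on, the two robots occupy the same
point and never move again. -/
noncomputable def Solves (u : Bool → ℝ) (A : Bool → Frame) (sched : ℕ → Bool → Bool)
    (c0 : Config) : Prop :=
  ∃ N : ℕ, ∀ n, N ≤ n → ∀ i, (run u A sched c0 n).pos i = (run u A sched c0 N).pos false

/-- Conditions on a robot: one of the six internal states, or `S₂⁼` / `S₂≠`. -/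
inductive Cond | start | s1 | s2 (d : Dir) | s2eq | s2ne | s3 | finish

/-- A robot in state `s` whose currently observed direction is `dir`
satisfies the condition. -/
def Cond.sat : Cond → St → Dir → Prop
  | .start, s, _ => s = .start
  | .s1, s, _ => s = .s1
  | .s2 d', s, _ => s = .s2 d'
  | .s2eq, s, dir => s = .s2 dir
  | .s2ne, s, dir => ∃ d', s = St.s2 d' ∧ d' ≠ dir
  | .s3, s, _ => s = .s3
  | .finish, s, _ => s = .finish

/-- `(S_a, S_b, I_a, I_b)↓` : for every choice of the units and frames, from
every configuration in which robot `r` satisfies condition `Ca` with observed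
distance in `Ia` and robot `s` satisfies condition `Cb` with observed distance
in `Ib`, every fair SSynch execution of Algorithm 1 solves Rendezvous. -/
noncomputable def Down (Ca Cb : Cond) (Ia Ib : Set ℝ) : Prop :=
  ∀ (u : Bool → ℝ) (A : Bool → Frame), (∀ i, 0 < u i) →
    ∀ c0 : Config,
      Ca.sat (c0.st false)
        (obsDir (obsVec (u false) (A false) (c0.pos false) (c0.pos true))) →
      obsDist (u false) (c0.pos false) (c0.pos true) ∈ Ia →
      Cb.sat (c0.st true)
        (obsDir (obsVec (u true) (A true) (c0.pos true) (c0.pos false))) →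
      obsDist (u true) (c0.pos true) (c0.pos false) ∈ Ib →
      ∀ sched : ℕ → Bool → Bool, FairSched sched → Solves u A sched c0

/-!
All motion happens along the line through the two initial positions, so a configuration is
described by the robots' states and one real number `scale`: the current displacement between
the robots divided by the initial one. Robot `i` then observes `scale • wᵢ`, where `wᵢ` is its
initial observation. If both robots are activated in the first round they swap places and both
enter `S_2^≠` (the scale becomes `-1`); otherwise they meet at once. From there on the
configuration stays in the invariant set `Safe`, a union of a few explicit phases. Every round either leaves the
configuration unchanged or strictly decreases the potential
`⌊|scale| · (‖w₀‖ + ‖w₁‖)⌋ + rank₀ + rank₁`, because states only advance and a move that keeps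
the states halves the scale while some observed distance is at least `1`. As long as the robots
have not met, some robot is not in `S_finish` and its next activation changes the
configuration, so fairness forces the potential down until the scale vanishes.
-/

lemma Nat.floor_lt_floor_of_le_half {x y : ℝ} (hx : 1 ≤ x) (hy : 0 ≤ y) (hyx : y ≤ x / 2) :
    ⌊y⌋₊ < ⌊x⌋₊ := by
  have h1 : (1 : ℝ) ≤ ⌊x⌋₊ := by exact_mod_cast Nat.le_floor (by exact_mod_cast hx)
  rw [Nat.floor_lt hy]
  linarith [Nat.lt_floor_add_one x]

theorem exists_of_fair_variant {ι α : Type*} (step : (ι → Bool) → α → α) (P Done : α → Prop)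
    (V : α → ℕ) (hP : ∀ act a, P a → P (step act a))
    (hV : ∀ act a, P a → step act a ≠ a → V (step act a) < V a)
    (hprog : ∀ a, P a → ¬ Done a → ∃ i, ∀ act, act i = true → step act a ≠ a)
    {sched : ℕ → ι → Bool} (hfair : ∀ i n, ∃ m, n ≤ m ∧ sched m i = true)
    {x : ℕ → α} (hx : ∀ n, x (n + 1) = step (sched n) (x n)) (h0 : P (x 0)) :
    ∃ n, Done (x n) := by
  have hPx : ∀ n, P (x n) := fun n => Nat.rec h0 (fun n ih => hx n ▸ hP _ _ ih) n
  have hstep : ∀ n, x (n + 1) = x n ∨ V (x (n + 1)) < V (x n) := fun n => by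
    rw [hx]
    by_cases h : step (sched n) (x n) = x n
    · exact .inl h
    · exact .inr (hV _ _ (hPx n) h)
  have hmono : ∀ n m, n ≤ m → x m = x n ∨ V (x m) < V (x n) := by
    intro n m hnm
    induction m, hnm using Nat.le_induction with
    | base => exact .inl rfl
    | succ m _ ih =>
      rcases hstep m with h | h
      · rwa [h]
      · right
        rcases ih with ih | ih
        · rwa [← ih]
        · exact h.trans ih
  suffices ∀ v n, V (x n) = v → ∃ m, Done (x m) from this _ 0 rfl
  intro v
  induction v using Nat.strong_induction_on with
  | _ v ih =>
  intro n hn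
  by_cases hd : Done (x n)
  · exact ⟨n, hd⟩
  obtain ⟨i, hi⟩ := hprog _ (hPx n) hd
  obtain ⟨m, hnm, hm⟩ := hfair i n
  refine ih _ ?_ (m + 1) rfl
  rw [← hn]
  rcases hmono n m hnm with h | h
  · have hne : x (m + 1) ≠ x m := by rw [hx, h]; exact hi _ hm
    rw [← h]
    exact (hstep m).resolve_left hne
  · rcases hstep m with h' | h'
    · rwa [h']
    · exact h'.trans h

lemma obsDir_smul_of_pos {c : ℝ} (hc : 0 < c) (v : Pt) : obsDir (c • v) = obsDir v := by
  simp only [obsDir, PiLp.smul_apply, smul_eq_mul, mul_pos_iff_of_pos_left hc, mul_eq_zero,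
    hc.ne', false_or]

lemma obsDir_neg_ne {v : Pt} (hv : v ≠ 0) : obsDir (-v) ≠ obsDir v := by
  have hv' : v 0 ≠ 0 ∨ v 1 ≠ 0 := by
    by_contra! h
    exact hv (by ext i; fin_cases i <;> simp [h.1, h.2])
  have key : ∀ a b : ℝ, a ≠ 0 ∨ b ≠ 0 →
      ((0 < -a ∨ -a = 0 ∧ 0 < -b) ↔ ¬(0 < a ∨ a = 0 ∧ 0 < b)) := by
    intro a b hab
    rcases lt_trichotomy a 0 with ha | rfl | ha
    · simp [ha, ha.ne, ha.not_gt]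
    · rcases lt_trichotomy b 0 with hb | rfl | hb <;> simp_all [le_of_lt]
    · simp [ha, ha.ne', ha.le]
  simp only [obsDir, PiLp.neg_apply, key _ _ hv']
  split_ifs <;> simp

lemma obsDir_smul_of_neg {c : ℝ} (hc : c < 0) {v : Pt} (hv : v ≠ 0) :
    obsDir (c • v) ≠ obsDir v := by
  have hcv : (-c) • v ≠ 0 := smul_ne_zero (by linarith) hv
  rw [show c • v = -((-c) • v) by module, ← obsDir_smul_of_pos (neg_pos.2 hc) v]
  exact obsDir_neg_ne hcv

lemma obsVec_eq_smul {u : ℝ} {A : Frame} {p q p' q' : Pt} {g : ℝ} (h : q' - p' = g • (q - p)) :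
    obsVec u A p' q' = g • obsVec u A p q := by
  rw [obsVec, obsVec, h, map_smul, smul_comm]

lemma obsDist_eq_norm_obsVec {u : ℝ} (hu : 0 < u) (A : Frame) (p q : Pt) :
    obsDist u p q = ‖obsVec u A p q‖ := by
  rw [obsDist, obsVec, norm_smul, LinearIsometryEquiv.norm_map, norm_inv, Real.norm_of_nonneg hu.le,
    div_eq_inv_mul]

def St.rank : St → ℕ
  | .start => 4
  | .s1 => 3
  | .s2 _ => 2
  | .s3 => 1
  | .finish => 0

lemma algo1_fst_eq_or_rank_lt (s : St) (d : ℝ) (dir : Dir) :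
    (algo1 s d dir).1 = s ∨ (algo1 s d dir).1.rank < s.rank := by
  cases s <;> simp only [algo1] <;> split_ifs <;> simp [St.rank]

lemma algo1_snd_mem_Icc {s : St} (hs : s ≠ .start) (d : ℝ) (dir : Dir) :
    (algo1 s d dir).2 ∈ Set.Icc 0 1 := by
  cases s <;> simp only [algo1] at hs ⊢ <;> split_ifs <;> simp_all <;> norm_num

lemma algo1_snd_of_fst_eq {s : St} {d : ℝ} {dir : Dir} (hs : s ≠ .finish) (hd : d ≠ 0)
    (h : (algo1 s d dir).1 = s) : (algo1 s d dir).2 = 1 / 2 ∧ 1 ≤ d := by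
  cases s <;> simp only [algo1, hd, ↓reduceIte] at hs h ⊢ <;> split_ifs at h ⊢ <;>
    simp_all

@[ext] structure LineConfig where
  scale : ℝ
  st : Bool → St

namespace LineConfig

variable (w : Bool → Pt)

noncomputable def dist (a : LineConfig) (i : Bool) : ℝ := |a.scale| * ‖w i‖

noncomputable def move (a : LineConfig) (i : Bool) : St × ℝ :=
  algo1 (a.st i) (a.dist w i) (obsDir (a.scale • w i))

noncomputable def advance (act : Bool → Bool) (a : LineConfig) (i : Bool) : ℝ :=
  if act i then (a.move w i).2 else 0

noncomputable def step (act : Bool → Bool) (a : LineConfig) : LineConfig where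
  scale := a.scale * (1 - (a.advance w act false + a.advance w act true))
  st i := if act i then (a.move w i).1 else a.st i

noncomputable def run (sched : ℕ → Bool → Bool) (a0 : LineConfig) : ℕ → LineConfig
  | 0 => a0
  | n + 1 => (run sched a0 n).step w (sched n)

variable {w} {a : LineConfig} {act : Bool → Bool} {i : Bool}

lemma advance_add_advance (act : Bool → Bool) (a : LineConfig) (i : Bool) :
    a.advance w act i + a.advance w act (!i) = a.advance w act false + a.advance w act true := by
  cases i <;> simp [add_comm]

lemma step_scale (act : Bool → Bool) (a : LineConfig) (i : Bool) :
    (a.step w act).scale = a.scale * (1 - (a.advance w act i + a.advance w act (!i))) := by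
  rw [advance_add_advance]; rfl

lemma dist_step (act : Bool → Bool) (a : LineConfig) (i j : Bool) :
    (a.step w act).dist w j = |1 - (a.advance w act i + a.advance w act (!i))| * a.dist w j := by
  rw [dist, dist, step_scale act a i, abs_mul]; ring

lemma dist_pos (hg : a.scale ≠ 0) (hw : w i ≠ 0) : 0 < a.dist w i :=
  mul_pos (abs_pos.2 hg) (norm_pos_iff.2 hw)

lemma move_finish (hs : a.st i = .finish) (hd : a.dist w i ≤ 1) :
    a.move w i = (.finish, 0) := by
  simp [move, algo1, hs, hd]

lemma move_s1 (hs : a.st i = .s1) (hg : 0 < a.scale) (hd : 1 < a.dist w i) :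
    a.move w i = (.s2 (obsDir (w i)), 1) := by
  simp [move, algo1, hs, (by linarith : a.dist w i ≠ 0), hd.not_ge, obsDir_smul_of_pos hg]

lemma move_s2_of_pos (hs : a.st i = .s2 (obsDir (w i))) (hg : 0 < a.scale) (hw : w i ≠ 0) :
    a.move w i = (.finish, 1) := by
  simp [move, algo1, hs, (dist_pos hg.ne' hw).ne', obsDir_smul_of_pos hg]

lemma move_s2_of_neg_of_lt (hs : a.st i = .s2 (obsDir (w i))) (hg : a.scale < 0) (hw : w i ≠ 0)
    (hd : a.dist w i < 1 / 2) : a.move w i = (.finish, 0) := by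
  simp only [move, algo1, hs, (dist_pos hg.ne hw).ne', obsDir_smul_of_neg hg hw, hd, ↓reduceIte]

lemma move_s2_of_neg_of_mem (hs : a.st i = .s2 (obsDir (w i))) (hg : a.scale < 0)
    (hw : w i ≠ 0) (hd : 1 / 2 ≤ a.dist w i) (hd' : a.dist w i < 1) :
    a.move w i = (.s3, 1 / 2) := by
  simp only [move, algo1, hs, (dist_pos hg.ne hw).ne', obsDir_smul_of_neg hg hw, hd.not_gt, hd',
    ↓reduceIte]

lemma move_s2_of_neg_of_ge (hs : a.st i = .s2 (obsDir (w i))) (hg : a.scale < 0)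
    (hw : w i ≠ 0) (hd : 1 ≤ a.dist w i) :
    a.move w i = (.s2 (obsDir (w i)), 1 / 2) := by
  have : ¬ a.dist w i < 1 / 2 := by linarith
  simp only [move, algo1, hs, (dist_pos hg.ne hw).ne', obsDir_smul_of_neg hg hw, hd.not_gt, this,
    ↓reduceIte]

lemma move_s3_of_lt (hs : a.st i = .s3) (hg : a.scale ≠ 0) (hw : w i ≠ 0)
    (hd : a.dist w i < 1 / 4) : a.move w i = (.finish, 0) := by
  simp only [move, algo1, hs, (dist_pos hg hw).ne', hd, ↓reduceIte]

lemma move_s3_of_ge (hs : a.st i = .s3) (hd : 1 / 4 ≤ a.dist w i) :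
    a.move w i = (.finish, 1) := by
  have : a.dist w i ≠ 0 := by linarith
  simp only [move, algo1, hs, this, hd.not_gt, ↓reduceIte]

lemma move_snd_of_s2_of_neg (hs : a.st i = .s2 (obsDir (w i))) (hg : a.scale < 0) (hw : w i ≠ 0)
    (hd : 1 / 2 ≤ a.dist w i) : (a.move w i).2 = 1 / 2 := by
  rcases lt_or_ge (a.dist w i) 1 with h | h
  · rw [move_s2_of_neg_of_mem hs hg hw hd h]
  · rw [move_s2_of_neg_of_ge hs hg hw h]

lemma advance_of_act (h : act i = true) : a.advance w act i = (a.move w i).2 := by simp [advance, h]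

lemma advance_of_idle (h : act i = false) : a.advance w act i = 0 := by simp [advance, h]

lemma step_st_of_act (h : act i = true) : (a.step w act).st i = (a.move w i).1 := by
  simp [step, h]

lemma step_st_of_idle (h : act i = false) : (a.step w act).st i = a.st i := by simp [step, h]

lemma advance_eq_zero (h : (a.move w i).2 = 0) : a.advance w act i = 0 := by
  cases hi : act i
  · exact advance_of_idle hi
  · rw [advance_of_act hi, h]

lemma dist_step_of_advance_eq_zero (h : a.advance w act i + a.advance w act (!i) = 0) (j : Bool) :
    (a.step w act).dist w j = a.dist w j := by
  rw [dist_step act a i, h, sub_zero, abs_one, one_mul]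

lemma dist_step_of_advance_eq_half (h : a.advance w act i + a.advance w act (!i) = 1 / 2)
    (j : Bool) : (a.step w act).dist w j = a.dist w j / 2 := by
  rw [dist_step act a i, h]; norm_num; ring

lemma dist_step_of_advance_eq_three_halves (h : a.advance w act i + a.advance w act (!i) = 3 / 2)
    (j : Bool) : (a.step w act).dist w j = a.dist w j / 2 := by
  rw [dist_step act a i, h]; norm_num; ring

lemma step_eq_self (h : ∀ j, act j = true → a.move w j = (a.st j, 0)) : a.step w act = a := by
  have hadv : ∀ j, a.advance w act j = 0 := fun j => by
    cases hj : act j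
    · exact advance_of_idle hj
    · rw [advance_of_act hj, h j hj]
  obtain ⟨g, s⟩ := a
  simp only [step, hadv, add_zero, sub_zero, mul_one, mk.injEq, true_and]
  funext j
  cases hj : act j
  · rfl
  · simp [h j hj]

lemma step_of_scale_eq_zero (hg : a.scale = 0) : a.step w act = a :=
  step_eq_self fun j _ => by simp [move, dist, hg, algo1]

lemma rank_step_le (j : Bool) : ((a.step w act).st j).rank ≤ (a.st j).rank := by
  cases hj : act j
  · rw [step_st_of_idle hj]
  · rw [step_st_of_act hj]
    rcases algo1_fst_eq_or_rank_lt (a.st j) (a.dist w j) (obsDir (a.scale • w j)) with h | h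
    · exact (congrArg St.rank h).le
    · exact h.le

lemma rank_step_lt {j : Bool} (hne : (a.step w act).st j ≠ a.st j) :
    ((a.step w act).st j).rank < (a.st j).rank := by
  cases hj : act j
  · exact absurd (step_st_of_idle hj) hne
  · rw [step_st_of_act hj] at hne ⊢
    exact (algo1_fst_eq_or_rank_lt _ _ _).resolve_left hne

noncomputable def potential (w : Bool → Pt) (a : LineConfig) : ℕ :=
  ⌊|a.scale| * (‖w false‖ + ‖w true‖)⌋₊ + (a.st false).rank + (a.st true).rank

end LineConfig

noncomputable def Config.view (u : Bool → ℝ) (A : Bool → Frame) (c : Config) (i : Bool) : Pt :=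
  obsVec (u i) (A i) (c.pos i) (c.pos (!i))

def LineConfig.Describes (c0 : Config) (a : LineConfig) (c : Config) : Prop :=
  c.st = a.st ∧ ∀ i, c.pos (!i) - c.pos i = a.scale • (c0.pos (!i) - c0.pos i)

section Simulation

variable {u : Bool → ℝ} {A : Bool → Frame} {c0 : Config}

lemma LineConfig.Describes.stepConfig (hu : ∀ i, 0 < u i) (act : Bool → Bool) {c : Config}
    {a : LineConfig} (h : a.Describes c0 c) :
    (a.step (c0.view u A) act).Describes c0 (stepConfig u A act c) := by
  obtain ⟨hst, hpos⟩ := h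
  have hmove : ∀ i, algo1 (c.st i) (obsDist (u i) (c.pos i) (c.pos (!i)))
      (obsDir (obsVec (u i) (A i) (c.pos i) (c.pos (!i)))) = a.move (c0.view u A) i := by
    intro i
    have hv : obsVec (u i) (A i) (c.pos i) (c.pos (!i)) = a.scale • c0.view u A i :=
      obsVec_eq_smul (hpos i)
    rw [obsDist_eq_norm_obsVec (hu i) (A i), hv, norm_smul, Real.norm_eq_abs, hst]
    rfl
  refine ⟨funext fun i => ?_, fun i => ?_⟩
  · simp only [_root_.stepConfig, stepRobot, hmove]
    simp only [LineConfig.step, hst]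
  · have hni := hmove (!i)
    simp only [Bool.not_not] at hni
    simp only [_root_.stepConfig, stepRobot, Bool.not_not, hmove i, hni,
      LineConfig.step_scale act a i, LineConfig.advance]
    rw [mul_comm, mul_smul, ← hpos i]
    cases act i <;> cases act (!i) <;> simp <;> module

lemma run_describes (hu : ∀ i, 0 < u i) (sched : ℕ → Bool → Bool) (n : ℕ) :
    (LineConfig.run (c0.view u A) sched ⟨1, c0.st⟩ n).Describes c0 (run u A sched c0 n) := by
  induction n with
  | zero => exact ⟨rfl, fun i => (one_smul ℝ _).symm⟩
  | succ n ih => exact ih.stepConfig hu (sched n)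

lemma stepConfig_pos_of_eq {act : Bool → Bool} {c : Config} (h : c.pos true = c.pos false) :
    (stepConfig u A act c).pos = c.pos := by
  funext i
  cases i <;> simp [stepConfig, stepRobot, h]

lemma solves_of_pos_eq {sched : ℕ → Bool → Bool} {N : ℕ}
    (h : (run u A sched c0 N).pos true = (run u A sched c0 N).pos false) :
    Solves u A sched c0 := by
  have hfix : ∀ k, (run u A sched c0 (N + k)).pos = (run u A sched c0 N).pos := by
    intro k
    induction k with
    | zero => rfl
    | succ k ih =>
      rw [← add_assoc, run, stepConfig_pos_of_eq (by rw [ih]; exact h), ih]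
  refine ⟨N, fun n hn i => ?_⟩
  obtain ⟨k, rfl⟩ := Nat.exists_eq_add_of_le hn
  rw [hfix k]
  cases i
  · rfl
  · exact h

end Simulation

open LineConfig

/-- An invariant containing every configuration reachable from two robots in `S_1` at observed
distances `> 1`.
Robot `j` in state `s2 (obsDir (w j))` is in the paper's `S_2^≠` when `scale < 0` and in
`S_2^=` when `0 < scale`. -/
inductive Safe (w : Bool → Pt) : LineConfig → Prop
  | met {a : LineConfig} : a.scale = 0 → Safe w a
  | init {a : LineConfig} : 0 < a.scale → (∀ i, a.st i = .s1 ∧ 1 < a.dist w i) → Safe w a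
  | s2_s2 {a : LineConfig} (i : Bool) : a.scale < 0 → a.st i = .s2 (obsDir (w i)) →
      a.st (!i) = .s2 (obsDir (w (!i))) → 1 / 2 ≤ a.dist w i → Safe w a
  | s3_s2 {a : LineConfig} (i : Bool) : a.scale < 0 → a.st i = .s3 → a.dist w i < 1 / 2 →
      a.st (!i) = .s2 (obsDir (w (!i))) → (1 / 4 ≤ a.dist w i ∨ 1 / 2 ≤ a.dist w (!i)) →
      Safe w a
  | s3_s3 {a : LineConfig} (i : Bool) : a.st i = .s3 → a.dist w i < 1 / 4 → a.st (!i) = .s3 →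
      1 / 4 ≤ a.dist w (!i) → Safe w a
  | finish_s3 {a : LineConfig} (i : Bool) : a.st i = .finish → a.dist w i ≤ 1 →
      a.st (!i) = .s3 → 1 / 4 ≤ a.dist w (!i) → Safe w a
  | finish_s2 {a : LineConfig} (i : Bool) : a.st i = .finish → a.dist w i ≤ 1 →
      a.st (!i) = .s2 (obsDir (w (!i))) → (a.scale < 0 → 1 / 2 ≤ a.dist w (!i)) → Safe w a

namespace Safe

variable {w : Bool → Pt} {a : LineConfig} {act : Bool → Bool} {i : Bool}

lemma step_of_init (hg : 0 < a.scale) (h : ∀ i, a.st i = .s1 ∧ 1 < a.dist w i) :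
    Safe w (a.step w act) := by
  have hmove : ∀ i, a.move w i = (.s2 (obsDir (w i)), 1) := fun i => move_s1 (h i).1 hg (h i).2
  cases h0 : act false <;> cases h1 : act true
  · rw [step_eq_self fun j hj => by cases j <;> simp_all]
    exact .init hg h
  · exact .met (by simp [step, advance, h0, h1, hmove])
  · exact .met (by simp [step, advance, h0, h1, hmove])
  · refine .s2_s2 false (by simp [step, advance, h0, h1, hmove]; linarith)
      (by simp [step, h0, hmove]) (by simp [step, h1, hmove]) ?_
    rw [dist_step act a false]
    norm_num [advance, h0, h1, hmove]
    linarith [(h false).2]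

lemma step_of_s2_s2_of_idle (hw : ∀ j, w j ≠ 0) (hg : a.scale < 0)
    (hs : a.st i = .s2 (obsDir (w i))) (hs' : a.st (!i) = .s2 (obsDir (w (!i))))
    (hd : 1 / 2 ≤ a.dist w i) (hi : act i = true) (hni : act (!i) = false) :
    Safe w (a.step w act) := by
  have hadv : a.advance w act i + a.advance w act (!i) = 1 / 2 := by
    rw [advance_of_act hi, advance_of_idle hni, move_snd_of_s2_of_neg hs hg (hw i) hd, add_zero]
  have hscale : (a.step w act).scale < 0 := by rw [step_scale act a i, hadv]; linarith
  have hdist := dist_step_of_advance_eq_half hadv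
  have hst' : (a.step w act).st (!i) = _ := (step_st_of_idle hni).trans hs'
  rcases lt_or_ge (a.dist w i) 1 with h1 | h1
  · refine .s3_s2 i hscale ?_ ?_ hst' (.inl ?_)
    · rw [step_st_of_act hi, move_s2_of_neg_of_mem hs hg (hw i) hd h1]
    all_goals rw [hdist]; linarith
  · refine .s2_s2 i hscale ?_ hst' (by rw [hdist]; linarith)
    rw [step_st_of_act hi, move_s2_of_neg_of_ge hs hg (hw i) h1]

lemma step_of_s2_s2 (hw : ∀ j, w j ≠ 0) (hg : a.scale < 0) (hs : a.st i = .s2 (obsDir (w i)))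
    (hs' : a.st (!i) = .s2 (obsDir (w (!i)))) (hd : 1 / 2 ≤ a.dist w i) :
    Safe w (a.step w act) := by
  cases hi : act i <;> cases hni : act (!i)
  · rw [step_eq_self fun j hj => by cases j <;> cases i <;> simp_all]
    exact .s2_s2 i hg hs hs' hd
  · rcases lt_or_ge (a.dist w (!i)) (1 / 2) with h | h
    · have hmove := move_s2_of_neg_of_lt hs' hg (hw _) h
      have hadv : a.advance w act i + a.advance w act (!i) = 0 := by
        rw [advance_of_idle hi, advance_of_act hni, hmove, add_zero]
      have hdist := dist_step_of_advance_eq_zero hadv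
      refine .finish_s2 (!i) (by rw [step_st_of_act hni, hmove]) (by rw [hdist]; linarith)
        (by rw [Bool.not_not, step_st_of_idle hi, hs]) (fun _ => by rwa [Bool.not_not, hdist])
    · exact step_of_s2_s2_of_idle hw hg hs' (by rwa [Bool.not_not]) h hni (by rwa [Bool.not_not])
  · exact step_of_s2_s2_of_idle hw hg hs hs' hd hi hni
  · rcases lt_or_ge (a.dist w (!i)) (1 / 2) with h | h
    · have hmove := move_s2_of_neg_of_lt hs' hg (hw _) h
      have hadv : a.advance w act i + a.advance w act (!i) = 1 / 2 := by
        rw [advance_of_act hi, advance_of_act hni, hmove, move_snd_of_s2_of_neg hs hg (hw i) hd,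
          add_zero]
      have hdist := dist_step_of_advance_eq_half hadv
      have hst' : (a.step w act).st (!i) = .finish := by rw [step_st_of_act hni, hmove]
      rcases lt_or_ge (a.dist w i) 1 with h1 | h1
      · refine .finish_s3 (!i) hst' (by rw [hdist]; linarith) ?_
          (by rw [Bool.not_not, hdist]; linarith)
        rw [Bool.not_not, step_st_of_act hi, move_s2_of_neg_of_mem hs hg (hw i) hd h1]
      · refine .finish_s2 (!i) hst' (by rw [hdist]; linarith) ?_
          (fun _ => by rw [Bool.not_not, hdist]; linarith)
        rw [Bool.not_not, step_st_of_act hi, move_s2_of_neg_of_ge hs hg (hw i) h1]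
    · refine .met ?_
      rw [step_scale act a i, advance_of_act hi, advance_of_act hni,
        move_snd_of_s2_of_neg hs hg (hw i) hd, move_snd_of_s2_of_neg hs' hg (hw _) h]
      ring

lemma step_of_finish_s2 (hw : ∀ j, w j ≠ 0) (hs : a.st i = .finish) (hd : a.dist w i ≤ 1)
    (hs' : a.st (!i) = .s2 (obsDir (w (!i)))) (hd' : a.scale < 0 → 1 / 2 ≤ a.dist w (!i)) :
    Safe w (a.step w act) := by
  have hmove := move_finish hs hd
  cases hni : act (!i)
  · rw [step_eq_self fun j hj => by cases j <;> cases i <;> simp_all]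
    exact .finish_s2 i hs hd hs' hd'
  have hst : (a.step w act).st i = .finish := by
    cases hi : act i
    · rw [step_st_of_idle hi, hs]
    · rw [step_st_of_act hi, hmove]
  rcases lt_trichotomy a.scale 0 with hg | hg | hg
  · have hd' := hd' hg
    have hadv : a.advance w act i + a.advance w act (!i) = 1 / 2 := by
      rw [advance_eq_zero (by rw [hmove]), advance_of_act hni,
        move_snd_of_s2_of_neg hs' hg (hw _) hd', zero_add]
    have hdist := dist_step_of_advance_eq_half hadv
    rcases lt_or_ge (a.dist w (!i)) 1 with h1 | h1
    · refine .finish_s3 i hst (by rw [hdist]; linarith) ?_ (by rw [hdist]; linarith)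
      rw [step_st_of_act hni, move_s2_of_neg_of_mem hs' hg (hw _) hd' h1]
    · refine .finish_s2 i hst (by rw [hdist]; linarith) ?_ (fun _ => by rw [hdist]; linarith)
      rw [step_st_of_act hni, move_s2_of_neg_of_ge hs' hg (hw _) h1]
  · rw [step_of_scale_eq_zero hg]
    exact .met hg
  · refine .met ?_
    rw [step_scale act a i, advance_eq_zero (by rw [hmove]), advance_of_act hni,
      move_s2_of_pos hs' hg (hw _)]
    ring

lemma step_of_finish_s3 (hs : a.st i = .finish) (hd : a.dist w i ≤ 1) (hs' : a.st (!i) = .s3)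
    (hd' : 1 / 4 ≤ a.dist w (!i)) : Safe w (a.step w act) := by
  have hmove := move_finish hs hd
  cases hni : act (!i)
  · rw [step_eq_self fun j hj => by cases j <;> cases i <;> simp_all]
    exact .finish_s3 i hs hd hs' hd'
  · refine .met ?_
    rw [step_scale act a i, advance_eq_zero (by rw [hmove]), advance_of_act hni,
      move_s3_of_ge hs' hd']
    ring

lemma step_of_s3_s3 (hw : ∀ j, w j ≠ 0) (hs : a.st i = .s3) (hd : a.dist w i < 1 / 4)
    (hs' : a.st (!i) = .s3) (hd' : 1 / 4 ≤ a.dist w (!i)) : Safe w (a.step w act) := by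
  by_cases hg : a.scale = 0
  · rw [step_of_scale_eq_zero hg]
    exact .met hg
  have hmove := move_s3_of_lt hs hg (hw i) hd
  cases hni : act (!i)
  · cases hi : act i
    · rw [step_eq_self fun j hj => by cases j <;> cases i <;> simp_all]
      exact .s3_s3 i hs hd hs' hd'
    · have hadv : a.advance w act i + a.advance w act (!i) = 0 := by
        rw [advance_of_act hi, advance_of_idle hni, hmove, add_zero]
      have hdist := dist_step_of_advance_eq_zero hadv
      refine .finish_s3 i (by rw [step_st_of_act hi, hmove]) (by rw [hdist]; linarith)
        (by rw [step_st_of_idle hni, hs']) (by rw [hdist]; exact hd')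
  · refine .met ?_
    rw [step_scale act a i, advance_eq_zero (by rw [hmove]), advance_of_act hni,
      move_s3_of_ge hs' hd']
    ring

lemma step_of_s3_s2_of_idle (hw : ∀ j, w j ≠ 0) (hg : a.scale < 0) (hs : a.st i = .s3)
    (hd : a.dist w i < 1 / 2) (hs' : a.st (!i) = .s2 (obsDir (w (!i))))
    (hd' : 1 / 4 ≤ a.dist w i ∨ 1 / 2 ≤ a.dist w (!i)) (hi : act i = false) :
    Safe w (a.step w act) := by
  cases hni : act (!i)
  · rw [step_eq_self fun j hj => by cases j <;> cases i <;> simp_all]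
    exact .s3_s2 i hg hs hd hs' hd'
  have hst : (a.step w act).st i = .s3 := by rw [step_st_of_idle hi, hs]
  rcases lt_or_ge (a.dist w (!i)) (1 / 2) with h | h
  · have hmove := move_s2_of_neg_of_lt hs' hg (hw _) h
    have hdist := dist_step_of_advance_eq_zero (i := i) (act := act) (by
      rw [advance_of_idle hi, advance_of_act hni, hmove, add_zero])
    refine .finish_s3 (!i) (by rw [step_st_of_act hni, hmove]) (by rw [hdist]; linarith)
      (by rwa [Bool.not_not]) ?_
    rw [Bool.not_not, hdist]
    exact hd'.resolve_right h.not_ge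
  · have hadv : a.advance w act i + a.advance w act (!i) = 1 / 2 := by
      rw [advance_of_idle hi, advance_of_act hni, move_snd_of_s2_of_neg hs' hg (hw _) h, zero_add]
    have hdist := dist_step_of_advance_eq_half hadv
    rcases lt_or_ge (a.dist w (!i)) 1 with h1 | h1
    · refine .s3_s3 i hst (by rw [hdist]; linarith) ?_ (by rw [hdist]; linarith)
      rw [step_st_of_act hni, move_s2_of_neg_of_mem hs' hg (hw _) h h1]
    · refine .s3_s2 i (by rw [step_scale act a i, hadv]; linarith) hst
        (by rw [hdist]; linarith) ?_ (.inr (by rw [hdist]; linarith))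
      rw [step_st_of_act hni, move_s2_of_neg_of_ge hs' hg (hw _) h1]

lemma step_of_s3_s2_of_act_of_act (hw : ∀ j, w j ≠ 0) (hg : a.scale < 0) (hs : a.st i = .s3)
    (hd : a.dist w i < 1 / 2) (hs' : a.st (!i) = .s2 (obsDir (w (!i))))
    (hd' : 1 / 4 ≤ a.dist w i ∨ 1 / 2 ≤ a.dist w (!i)) (hi : act i = true)
    (hni : act (!i) = true) : Safe w (a.step w act) := by
  rcases lt_or_ge (a.dist w (!i)) (1 / 2) with h | h
  · refine .met ?_
    rw [step_scale act a i, advance_of_act hi, advance_of_act hni,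
      move_s3_of_ge hs (hd'.resolve_right h.not_ge), move_s2_of_neg_of_lt hs' hg (hw _) h]
    ring
  have hμ := move_snd_of_s2_of_neg hs' hg (hw _) h
  -- If the `S_3` robot jumps, the total advance is `3 / 2` and the scale changes sign;
  -- `finish_s2` allows either sign.
  obtain ⟨hst, hdist⟩ : (a.step w act).st i = .finish ∧
      ∀ j, (a.step w act).dist w j = a.dist w j / 2 := by
    rcases lt_or_ge (a.dist w i) (1 / 4) with h3 | h3
    · have hmove := move_s3_of_lt hs hg.ne (hw i) h3
      refine ⟨by rw [step_st_of_act hi, hmove], dist_step_of_advance_eq_half (i := i) ?_⟩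
      rw [advance_of_act hi, advance_of_act hni, hmove, hμ, zero_add]
    · have hmove := move_s3_of_ge hs h3
      refine ⟨by rw [step_st_of_act hi, hmove],
        dist_step_of_advance_eq_three_halves (i := i) ?_⟩
      rw [advance_of_act hi, advance_of_act hni, hmove, hμ]
      norm_num
  rcases lt_or_ge (a.dist w (!i)) 1 with h1 | h1
  · refine .finish_s3 i hst (by rw [hdist]; linarith) ?_ (by rw [hdist]; linarith)
    rw [step_st_of_act hni, move_s2_of_neg_of_mem hs' hg (hw _) h h1]
  · refine .finish_s2 i hst (by rw [hdist]; linarith) ?_ fun _ => by rw [hdist]; linarith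
    rw [step_st_of_act hni, move_s2_of_neg_of_ge hs' hg (hw _) h1]

lemma step_of_s3_s2 (hw : ∀ j, w j ≠ 0) (hg : a.scale < 0) (hs : a.st i = .s3)
    (hd : a.dist w i < 1 / 2) (hs' : a.st (!i) = .s2 (obsDir (w (!i))))
    (hd' : 1 / 4 ≤ a.dist w i ∨ 1 / 2 ≤ a.dist w (!i)) : Safe w (a.step w act) := by
  cases hi : act i
  · exact step_of_s3_s2_of_idle hw hg hs hd hs' hd' hi
  cases hni : act (!i)
  · rcases lt_or_ge (a.dist w i) (1 / 4) with h | h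
    · have hmove := move_s3_of_lt hs hg.ne (hw i) h
      have hdist := dist_step_of_advance_eq_zero (i := i) (act := act) (by
        rw [advance_of_act hi, advance_of_idle hni, hmove, add_zero])
      refine .finish_s2 i (by rw [step_st_of_act hi, hmove]) (by rw [hdist]; linarith)
        (by rw [step_st_of_idle hni, hs']) fun _ => ?_
      rw [hdist]
      exact hd'.resolve_left h.not_ge
    · refine .met ?_
      rw [step_scale act a i, advance_of_act hi, advance_of_idle hni, move_s3_of_ge hs h]
      ring
  · exact step_of_s3_s2_of_act_of_act hw hg hs hd hs' hd' hi hni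

theorem step (hw : ∀ j, w j ≠ 0) (h : Safe w a) (act : Bool → Bool) : Safe w (a.step w act) := by
  cases h with
  | met hg => rw [step_of_scale_eq_zero hg]; exact .met hg
  | init hg h => exact step_of_init hg h
  | s2_s2 i hg hs hs' hd => exact step_of_s2_s2 hw hg hs hs' hd
  | s3_s2 i hg hs hd hs' hd' => exact step_of_s3_s2 hw hg hs hd hs' hd'
  | s3_s3 i hs hd hs' hd' => exact step_of_s3_s3 hw hs hd hs' hd'
  | finish_s3 i hs hd hs' hd' => exact step_of_finish_s3 hs hd hs' hd'
  | finish_s2 i hs hd hs' hd' => exact step_of_finish_s2 hw hs hd hs' hd'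

lemma st_ne_start (h : Safe w a) (hg : a.scale ≠ 0) (j : Bool) : a.st j ≠ .start := by
  cases h with
  | met h0 => exact absurd h0 hg
  | init _ h => simp [(h j).1]
  | s2_s2 i _ hs hs' _ | s3_s2 i _ hs _ hs' _ | s3_s3 i hs _ hs' _ | finish_s3 i hs _ hs' _
  | finish_s2 i hs _ hs' _ => cases j <;> cases i <;> simp_all

lemma dist_le_one_of_finish (h : Safe w a) {j : Bool} (hj : a.st j = .finish) :
    a.dist w j ≤ 1 := by
  cases h with
  | met h0 => simp [LineConfig.dist, h0]
  | init _ h => simp [(h j).1] at hj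
  | s2_s2 i _ hs hs' _ | s3_s2 i _ hs _ hs' _ | s3_s3 i hs _ hs' _ =>
    cases j <;> cases i <;> simp_all
  | finish_s3 i hs hd hs' _ | finish_s2 i hs hd hs' _ => cases j <;> cases i <;> simp_all

lemma exists_st_ne_finish (h : Safe w a) (hg : a.scale ≠ 0) : ∃ j, a.st j ≠ .finish := by
  cases h with
  | met h0 => exact absurd h0 hg
  | init _ h => exact ⟨false, by simp [(h false).1]⟩
  | s2_s2 i _ hs _ _ | s3_s2 i _ hs _ _ _ | s3_s3 i hs _ _ _ => exact ⟨i, by simp [hs]⟩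
  | finish_s3 i _ _ hs' _ | finish_s2 i _ _ hs' _ => exact ⟨!i, by simp [hs']⟩

lemma advance_mem_Icc (h : Safe w a) (hg : a.scale ≠ 0) (j : Bool) :
    a.advance w act j ∈ Set.Icc 0 1 := by
  unfold advance
  split_ifs
  · exact algo1_snd_mem_Icc (h.st_ne_start hg j) _ _
  · simp

lemma advance_of_step_st_eq (hw : ∀ j, w j ≠ 0) (h : Safe w a) (hg : a.scale ≠ 0) {j : Bool}
    (hj : (a.step w act).st j = a.st j) :
    a.advance w act j = 0 ∨ (a.advance w act j = 1 / 2 ∧ 1 ≤ a.dist w j) := by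
  cases hact : act j
  · exact .inl (advance_of_idle hact)
  rw [advance_of_act hact]
  rw [step_st_of_act hact] at hj
  by_cases hfin : a.st j = .finish
  · exact .inl (by rw [move_finish hfin (h.dist_le_one_of_finish hfin)])
  · exact .inr (algo1_snd_of_fst_eq hfin (dist_pos hg (hw j)).ne' hj)

lemma abs_scale_step_le (h : Safe w a) : |(a.step w act).scale| ≤ |a.scale| := by
  by_cases hg : a.scale = 0
  · rw [step_of_scale_eq_zero hg]
  have h0 := h.advance_mem_Icc (act := act) hg false
  have h1 := h.advance_mem_Icc (act := act) hg true
  rw [LineConfig.step, abs_mul]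
  exact mul_le_of_le_one_right (abs_nonneg _)
    (abs_le.2 ⟨by linarith [h0.2, h1.2], by linarith [h0.1, h1.1]⟩)

lemma abs_scale_step_le_half (hw : ∀ j, w j ≠ 0) (h : Safe w a)
    (hst : (a.step w act).st = a.st) (hsc : (a.step w act).scale ≠ a.scale) :
    |(a.step w act).scale| ≤ |a.scale| / 2 ∧ ∃ j, 1 ≤ a.dist w j := by
  have hg : a.scale ≠ 0 := fun hg => hsc (by rw [step_of_scale_eq_zero hg])
  rcases h.advance_of_step_st_eq hw hg (congrFun hst false) with h0 | ⟨h0, d0⟩ <;>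
    rcases h.advance_of_step_st_eq hw hg (congrFun hst true) with h1 | ⟨h1, d1⟩
  · exact absurd (by simp only [LineConfig.step, h0, h1]; ring) hsc
  all_goals
    refine ⟨?_, by first | exact ⟨false, d0⟩ | exact ⟨true, d1⟩⟩
    rw [LineConfig.step, abs_mul, h0, h1]
    norm_num
    linarith [abs_nonneg a.scale]

lemma potential_step_lt (hw : ∀ j, w j ≠ 0) (h : Safe w a) (hne : a.step w act ≠ a) :
    (a.step w act).potential w < a.potential w := by
  unfold potential
  have hK : 0 ≤ ‖w false‖ + ‖w true‖ := by positivity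
  have hfloor :=
    Nat.floor_le_floor (mul_le_mul_of_nonneg_right (h.abs_scale_step_le (act := act)) hK)
  have hr0 := rank_step_le (w := w) (a := a) (act := act) false
  have hr1 := rank_step_le (w := w) (a := a) (act := act) true
  by_cases hst : (a.step w act).st = a.st
  · obtain ⟨hhalf, j, hj⟩ :=
      h.abs_scale_step_le_half hw hst fun hsc => hne (LineConfig.ext hsc hst)
    have hjK : 1 ≤ |a.scale| * (‖w false‖ + ‖w true‖) := by
      refine hj.trans ?_
      unfold LineConfig.dist
      cases j <;> nlinarith [abs_nonneg a.scale, norm_nonneg (w false), norm_nonneg (w true)]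
    have := Nat.floor_lt_floor_of_le_half hjK
      (by positivity : 0 ≤ |(a.step w act).scale| * (‖w false‖ + ‖w true‖)) (by nlinarith)
    rw [hst]
    omega
  · obtain ⟨j, hj⟩ := Function.ne_iff.1 hst
    have := rank_step_lt hj
    cases j <;> omega

lemma step_ne (hw : ∀ j, w j ≠ 0) (h : Safe w a) (hg : a.scale ≠ 0) {j : Bool}
    (hj : a.st j ≠ .finish) (hact : act j = true) : a.step w act ≠ a := by
  intro heq
  have hst : (a.move w j).1 = a.st j := by rw [← step_st_of_act hact, heq]
  have hpj : a.advance w act j = 1 / 2 := by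
    rw [advance_of_act hact]
    exact (algo1_snd_of_fst_eq hj (dist_pos hg (hw j)).ne' hst).1
  have hpo := (h.advance_mem_Icc (act := act) hg (!j)).1
  have hsc := congrArg LineConfig.scale heq
  rw [step_scale act a j, hpj] at hsc
  have : 1 - (1 / 2 + a.advance w act (!j)) = 1 :=
    mul_left_cancel₀ hg (by rw [hsc, mul_one])
  linarith

end Safe

/-- Lemma 11: `(S_1, S_1, (1, ∞), (1, ∞))↓`. -/
theorem lemma_l1 :
    Down Cond.s1 Cond.s1 (Set.Ioi (1 : ℝ)) (Set.Ioi (1 : ℝ)) := by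
  intro u A hu c0 hs₀ hd₀ hs₁ hd₁ sched hsched
  have hd : ∀ i, 1 < ‖c0.view u A i‖ := by
    intro i
    rw [Config.view, ← obsDist_eq_norm_obsVec (hu i)]
    cases i
    exacts [hd₀, hd₁]
  set w := c0.view u A
  have hw : ∀ i, w i ≠ 0 := fun i => norm_pos_iff.1 (one_pos.trans (hd i))
  have hsafe : Safe w ⟨1, c0.st⟩ :=
    .init one_pos fun i => ⟨by cases i; exacts [hs₀, hs₁], by simpa [LineConfig.dist] using hd i⟩
  obtain ⟨n, hn⟩ := exists_of_fair_variant (LineConfig.step w) (Safe w) (fun a => a.scale = 0)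
    (LineConfig.potential w) (fun act _ h => h.step hw act)
    (fun _ _ h hne => h.potential_step_lt hw hne)
    (fun _ h hg => (h.exists_st_ne_finish hg).imp fun _ hj _ hact => h.step_ne hw hg hj hact)
    hsched.2 (x := LineConfig.run w sched ⟨1, c0.st⟩) (fun _ => rfl) hsafe
  apply solves_of_pos_eq (N := n)
  have hmeet := (run_describes (A := A) (c0 := c0) hu sched n).2 false
  rw [hn, zero_smul] at hmeet
  exact sub_eq_zero.1 hmeet
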